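/- arXiv:2408.10895 — 4 statements merged into one kernel-verified Lean document; each statement's English description precedes it below -/
import Mathlib

section
/- Suppose Condition (2) holds: ∑_{i=1}^∞ w̃_i = ∞ and ∑_{i=1}^∞ w̃_i² < ∞. Then the historical collective opinion converges to the ground-truth collective opinion almost surely: P[ lim_{i→∞} β_i = α ] = 1. -/
open MeasureTheory Filter

/-- Cumulative weight `∑_{j=1}^i w_j`. -/
noncomputable def Sw (w : ℕ → ℝ) (i : ℕ) : ℝ := ∑ j ∈ Finset.Icc 1 i, w j

/-- Normalized weight `w̃_i = w_i / ∑_{j=1}^i w_j`. -/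
noncomputable def wnorm (w : ℕ → ℝ) (i : ℕ) : ℝ := w i / Sw w i

/-- Historical collective opinion
`β_{i,m} = (∑_{j=1}^i w_j 1{R_j = m}) / (∑_{j=1}^i w_j)`. -/
noncomputable def betaH {Ω : Type*} (w : ℕ → ℝ) (R : ℕ → Ω → ℕ) (i m : ℕ) (ω : Ω) : ℝ :=
  (∑ j ∈ Finset.Icc 1 i, w j * (if R j ω = m then (1 : ℝ) else 0)) / Sw w i

/-- `𝓗_i`: the σ-algebra generated by `R_1, …, R_i` (trivial for `i = 0`). -/
def Hsig {Ω : Type*} (R : ℕ → Ω → ℕ) (i : ℕ) : MeasurableSpace Ω :=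
  ⨆ j ∈ Finset.Icc 1 i, MeasurableSpace.comap (R j) ⊤

/-!
Write `V_i = ‖β_i − α‖²` and `t_i = w̃_i`. From
`β_{i+1} − α = (1 − t_{i+1}) (β_i − α) + t_{i+1} (e_{R_{i+1}} − α)` and the herding model, the
cross term has mean `γ_i E⟨β_i − α, θ_i − α⟩ ≤ γ_i E V_i` (Cauchy–Schwarz and Assumption 1), so
`E V_{i+1} ≤ E V_i − (1 − g) t_{i+1} E V_i + M t_{i+1}²`, where `γ_i ≤ g < 1`. Telescoping with
`∑ t_i² < ∞` gives `∑ t_{i+1} E V_i < ∞`, hence `∑ t_{i+1} V_i < ∞` almost surely. Along such a path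
`V_{i+1} ≤ V_i + 3 M t_{i+1}`, `t_i → 0` and `∑ t_i = ∞`: `V` is infinitely often below any `ε`, and
climbing from `ε` back to `3 ε` would cost a large piece of `∑ t_{i+1} V_i`, so `V_i → 0`.
-/

open Topology

section RealSequences

variable {v a b : ℕ → ℝ}

lemma le_inv_mul_mul_of_le {x y ε : ℝ} (hx : 0 ≤ x) (hε : 0 < ε) (hy : ε ≤ y) :
    x ≤ ε⁻¹ * (x * y) := by
  rw [le_inv_mul_iff₀ hε, mul_comm ε]
  exact mul_le_mul_of_nonneg_left hy hx

lemma frequently_lt_of_summable_mul (ha : ∀ i, 0 ≤ a i) (hdiv : ¬ Summable a)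
    (hsum : Summable fun i => a i * v i) {ε : ℝ} (hε : 0 < ε) : ∃ᶠ i in atTop, v i < ε := by
  intro hge
  refine hdiv ((hsum.mul_left ε⁻¹).of_norm_bounded_eventually ?_)
  rw [Nat.cofinite_eq_atTop]
  filter_upwards [hge] with i hi
  rw [Real.norm_of_nonneg (ha i)]
  exact le_inv_mul_mul_of_le (ha i) hε (not_lt.1 hi)

lemma Summable.eventually_sum_Ico_lt {f : ℕ → ℝ} (hf : Summable f) (hf0 : ∀ i, 0 ≤ f i)
    {δ : ℝ} (hδ : 0 < δ) : ∀ᶠ n in atTop, ∀ N, ∑ i ∈ Finset.Ico n N, f i < δ := by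
  filter_upwards [(tendsto_sum_nat_add f).eventually (gt_mem_nhds hδ)] with n hn N
  rw [Finset.sum_Ico_eq_sum_range]
  refine lt_of_le_of_lt ?_ hn
  simp_rw [add_comm n]
  exact ((summable_nat_add_iff n).2 hf).sum_le_tsum _ fun i _ => hf0 _

lemma le_add_sum_Ico_of_le_add (hstep : ∀ i, v (i + 1) ≤ v i + a i) {n N : ℕ} (hnN : n ≤ N) :
    v N ≤ v n + ∑ i ∈ Finset.Ico n N, a i := by
  induction N, hnN using Nat.le_induction with
  | base => simp
  | succ N hnN ih => rw [Finset.sum_Ico_succ_top hnN]; linarith [hstep N]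

theorem tendsto_zero_of_le_add_mul_of_summable_mul {c : ℝ} (hc : 0 ≤ c) (hv : ∀ i, 0 ≤ v i)
    (ha : ∀ i, 0 ≤ a i) (hstep : ∀ i, v (i + 1) ≤ v i + c * a i)
    (hsum : Summable fun i => a i * v i) (hdiv : ¬ Summable a) (ha0 : Tendsto a atTop (𝓝 0)) :
    Tendsto v atTop (𝓝 0) := by
  suffices h : ∀ ε > 0, ∀ᶠ N in atTop, v N < 3 * ε by
    refine tendsto_order.2 ⟨fun b hb => .of_forall fun N => hb.trans_le (hv N), fun b hb => ?_⟩
    filter_upwards [h (b / 3) (by positivity)] with N hN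
    linarith
  intro ε hε
  have hca : ∀ᶠ i in atTop, c * a i < ε := by
    have hca0 := ha0.const_mul c
    rw [mul_zero] at hca0
    exact hca0.eventually (gt_mem_nhds hε)
  obtain ⟨T, hT⟩ := eventually_atTop.1 (hca.and
    (hsum.eventually_sum_Ico_lt (fun i => mul_nonneg (ha i) (hv i))
      (by positivity : 0 < ε ^ 2 / (c + 1))))
  obtain ⟨n₀, hn₀T, hn₀⟩ := (frequently_lt_of_summable_mul ha hdiv hsum hε).forall_exists_of_atTop T
  filter_upwards [eventually_ge_atTop n₀] with N hN
  -- `n` is the last time up to `N` with `v n < ε`; after it `v ≥ ε`, so the increments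
  -- `c * a i` over `(n, N)` are controlled by the small tail of `∑ a i * v i`.
  set n := Nat.findGreatest (fun i => v i < ε) N
  have hn₀n : n₀ ≤ n := Nat.le_findGreatest hN hn₀
  have hvn : v n < ε := Nat.findGreatest_spec (P := fun i => v i < ε) hN hn₀
  rcases (Nat.findGreatest_le N : n ≤ N).eq_or_lt with hnN | hnN
  · rw [← hnN]; linarith
  have hbig : ∀ i ∈ Finset.Ico (n + 1) N, ε ≤ v i := fun i hi =>
    not_lt.1 (Nat.findGreatest_is_greatest (Finset.mem_Ico.1 hi).1 (Finset.mem_Ico.1 hi).2.le)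
  have htail : ∑ i ∈ Finset.Ico (n + 1) N, a i ≤ ε⁻¹ * ∑ i ∈ Finset.Ico (n + 1) N, a i * v i := by
    rw [Finset.mul_sum]
    exact Finset.sum_le_sum fun i hi => le_inv_mul_mul_of_le (ha i) hε (hbig i hi)
  have hsmall : ε⁻¹ * ∑ i ∈ Finset.Ico (n + 1) N, a i * v i < ε / (c + 1) := by
    rw [inv_mul_lt_iff₀ hε]
    calc _ < ε ^ 2 / (c + 1) := (hT (n + 1) (by omega)).2 N
      _ = ε * (ε / (c + 1)) := by ring
  calc v N ≤ v n + c * ∑ i ∈ Finset.Ico n N, a i := by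
        rw [Finset.mul_sum]; exact le_add_sum_Ico_of_le_add hstep hnN.le
    _ = v n + c * a n + c * ∑ i ∈ Finset.Ico (n + 1) N, a i := by
      rw [Finset.sum_eq_sum_Ico_succ_bot hnN]; ring
    _ ≤ v n + c * a n + c * (ε / (c + 1)) := by gcongr; exact htail.trans hsmall.le
    _ < ε + ε + ε := by
      gcongr
      · exact (hT n (by omega)).1
      · rw [mul_div_assoc', div_lt_iff₀ (by positivity)]; nlinarith
    _ = 3 * ε := by ring

lemma summable_mul_of_le_sub_mul_add {κ : ℝ} (hκ : 0 < κ) (hv : ∀ i, 0 ≤ v i)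
    (ha : ∀ i, 0 ≤ a i) (hb : Summable b) (hb0 : ∀ i, 0 ≤ b i)
    (hstep : ∀ i, v (i + 1) ≤ v i - κ * (a i * v i) + b i) : Summable fun i => a i * v i := by
  have htel : ∀ n, κ * ∑ i ∈ Finset.range n, a i * v i + v n
      ≤ v 0 + ∑ i ∈ Finset.range n, b i := by
    intro n
    induction n with
    | zero => simp
    | succ n ih => rw [Finset.sum_range_succ, Finset.sum_range_succ]; linarith [hstep n]
  refine summable_of_sum_range_le (c := (v 0 + ∑' i, b i) / κ)
    (fun i => mul_nonneg (ha i) (hv i)) fun n => ?_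
  rw [le_div_iff₀' hκ]
  linarith [htel n, hv n, hb.sum_le_tsum (Finset.range n) fun i _ => hb0 i]

lemma tendsto_zero_of_tendsto_sq_zero {ι : Type*} {l : Filter ι} {f : ι → ℝ}
    (h : Tendsto (fun i => f i ^ 2) l (𝓝 0)) : Tendsto f l (𝓝 0) := by
  rw [tendsto_zero_iff_abs_tendsto_zero]
  simpa [Function.comp_def, Real.sqrt_sq_eq_abs] using (Real.continuous_sqrt.tendsto 0).comp h

end RealSequences

lemma Finset.sum_Icc_one_eq_sum_range {M : Type*} [AddCommMonoid M] (f : ℕ → M) (n : ℕ) :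
    ∑ i ∈ Finset.Icc 1 n, f i = ∑ i ∈ Finset.range n, f (i + 1) := by
  rw [Finset.range_eq_Ico, Finset.sum_Ico_add']
  rfl

lemma ae_summable_of_summable_integral {Ω : Type*} [MeasurableSpace Ω] {μ : Measure Ω}
    {f : ℕ → Ω → ℝ} (hf0 : ∀ i ω, 0 ≤ f i ω) (hf : ∀ i, Integrable (f i) μ)
    (hs : Summable fun i => ∫ ω, f i ω ∂μ) : ∀ᵐ ω ∂μ, Summable fun i => f i ω := by
  have hmeas : ∀ i, AEMeasurable (fun ω => ENNReal.ofReal (f i ω)) μ :=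
    fun i => (hf i).aemeasurable.ennreal_ofReal
  have hfin : ∫⁻ ω, ∑' i, ENNReal.ofReal (f i ω) ∂μ ≠ ⊤ := by
    rw [lintegral_tsum hmeas]
    simp_rw [← ofReal_integral_eq_lintegral_ofReal (hf _) (ae_of_all _ (hf0 _)),
      ← ENNReal.ofReal_tsum_of_nonneg (fun i => integral_nonneg (hf0 i)) hs]
    exact ENNReal.ofReal_ne_top
  filter_upwards [ae_lt_top' (AEMeasurable.tsum hmeas) hfin] with ω hω
  exact (ENNReal.summable_toReal hω.ne).congr fun i => ENNReal.toReal_ofReal (hf0 i ω)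

lemma abs_sub_le_one_of_mem_Icc {x y : ℝ} (hx : x ∈ Set.Icc (0 : ℝ) 1)
    (hy : y ∈ Set.Icc (0 : ℝ) 1) : |x - y| ≤ 1 := by
  simpa using abs_sub_le_of_le_of_le hx.1 hx.2 hy.1 hy.2

lemma ite_one_zero_mem_Icc (p : Prop) [Decidable p] :
    (if p then (1 : ℝ) else 0) ∈ Set.Icc (0 : ℝ) 1 := by
  split_ifs <;> simp

lemma sum_mul_le_sum_sq_of_sum_sq_le {ι : Type*} {s : Finset ι} {x y : ι → ℝ}
    (h : ∑ m ∈ s, y m ^ 2 ≤ ∑ m ∈ s, x m ^ 2) : ∑ m ∈ s, x m * y m ≤ ∑ m ∈ s, x m ^ 2 :=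
  calc ∑ m ∈ s, x m * y m ≤ √(∑ m ∈ s, x m ^ 2) * √(∑ m ∈ s, y m ^ 2) :=
        Real.sum_mul_le_sqrt_mul_sqrt s x y
    _ ≤ √(∑ m ∈ s, x m ^ 2) * √(∑ m ∈ s, x m ^ 2) := by gcongr
    _ = ∑ m ∈ s, x m ^ 2 := Real.mul_self_sqrt (Finset.sum_nonneg fun m _ => sq_nonneg _)

lemma integrable_mul_of_abs_le_one {Ω : Type*} [MeasurableSpace Ω] {μ : Measure Ω}
    [IsFiniteMeasure μ] {f g : Ω → ℝ} (hf : Measurable f) (hg : Measurable g)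
    (hf1 : ∀ ω, |f ω| ≤ 1) (hg1 : ∀ ω, |g ω| ≤ 1) : Integrable (fun ω => f ω * g ω) μ :=
  .of_bound (hf.mul hg).aestronglyMeasurable 1 <| ae_of_all _ fun ω => by
    rw [Real.norm_eq_abs, abs_mul]
    exact mul_le_one₀ (hf1 ω) (abs_nonneg _) (hg1 ω)

lemma integral_mul_eq_of_condExp_eq {Ω : Type*} {m m₀ : MeasurableSpace Ω} {μ : Measure Ω}
    (hm : m ≤ m₀) [SigmaFinite (μ.trim hm)] {f g h : Ω → ℝ} (hf : StronglyMeasurable[m] f)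
    (hfg : Integrable (fun ω => f ω * g ω) μ) (hg : Integrable g μ) (hgh : μ[g | m] =ᵐ[μ] h) :
    ∫ ω, f ω * g ω ∂μ = ∫ ω, f ω * h ω ∂μ :=
  calc ∫ ω, f ω * g ω ∂μ = ∫ ω, μ[f * g | m] ω ∂μ := (integral_condExp hm).symm
    _ = ∫ ω, f ω * h ω ∂μ := integral_congr_ae <|
      (condExp_mul_of_stronglyMeasurable_left hf hfg hg).trans (EventuallyEq.rfl.mul hgh)

lemma Measurable.ite_eq_one_zero {Ω β : Type*} {m₀ : MeasurableSpace Ω} [MeasurableSpace β]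
    [MeasurableSingletonClass β] [DecidableEq β] {f : Ω → β} (hf : Measurable f) (b : β) :
    Measurable fun ω => if f ω = b then (1 : ℝ) else 0 :=
  Measurable.ite (hf (measurableSet_singleton b)) measurable_const measurable_const

section HerdingModel

variable {Ω : Type*} {w : ℕ → ℝ} {R : ℕ → Ω → ℕ}

lemma Sw_nonneg (hw : ∀ j, 0 ≤ w j) (i : ℕ) : 0 ≤ Sw w i :=
  Finset.sum_nonneg fun j _ => hw j

lemma wnorm_nonneg (hw : ∀ j, 0 ≤ w j) (i : ℕ) : 0 ≤ wnorm w i :=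
  div_nonneg (hw i) (Sw_nonneg hw i)

lemma wnorm_le_one (hw : ∀ j, 0 ≤ w j) (i : ℕ) : wnorm w i ≤ 1 := by
  rcases Nat.eq_zero_or_pos i with rfl | hi
  · simp [wnorm, Sw]
  · exact div_le_one_of_le₀
      (Finset.single_le_sum (fun j _ => hw j) (Finset.mem_Icc.2 ⟨hi, le_rfl⟩)) (Sw_nonneg hw i)

lemma sum_mul_ite_mem_Icc (hw : ∀ j, 0 ≤ w j) (i m : ℕ) (ω : Ω) :
    ∑ j ∈ Finset.Icc 1 i, w j * (if R j ω = m then (1 : ℝ) else 0) ∈ Set.Icc 0 (Sw w i) :=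
  ⟨Finset.sum_nonneg fun j _ => mul_nonneg (hw j) (ite_one_zero_mem_Icc _).1,
    Finset.sum_le_sum fun j _ => mul_le_of_le_one_right (hw j) (ite_one_zero_mem_Icc _).2⟩

lemma betaH_mem_Icc (hw : ∀ j, 0 ≤ w j) (i m : ℕ) (ω : Ω) :
    betaH w R i m ω ∈ Set.Icc (0 : ℝ) 1 :=
  ⟨div_nonneg (sum_mul_ite_mem_Icc hw i m ω).1 (Sw_nonneg hw i),
    div_le_one_of_le₀ (sum_mul_ite_mem_Icc hw i m ω).2 (Sw_nonneg hw i)⟩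

lemma betaH_succ (hw : ∀ j, 0 ≤ w j) (i m : ℕ) (ω : Ω) :
    betaH w R (i + 1) m ω = (1 - wnorm w (i + 1)) * betaH w R i m ω
      + wnorm w (i + 1) * (if R (i + 1) ω = m then (1 : ℝ) else 0) := by
  have hS : Sw w (i + 1) = Sw w i + w (i + 1) := Finset.sum_Icc_succ_top (by omega) _
  -- the numerator of `betaH` is `Sw w i * betaH`, also when `Sw w i = 0`
  have hnum : ∑ j ∈ Finset.Icc 1 i, w j * (if R j ω = m then (1 : ℝ) else 0)
      = Sw w i * betaH w R i m ω := by
    rcases (Sw_nonneg hw i).eq_or_lt with h0 | hpos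
    · have := sum_mul_ite_mem_Icc (R := R) hw i m ω
      rw [← h0] at this ⊢
      simp only [zero_mul]; exact le_antisymm this.2 this.1
    · rw [betaH, mul_div_cancel₀ _ hpos.ne']
  unfold betaH wnorm
  rw [Finset.sum_Icc_succ_top (by omega), hnum]
  rcases (Sw_nonneg hw (i + 1)).eq_or_lt with h0 | hpos
  · have hi0 : Sw w i = 0 := by linarith [Sw_nonneg hw i, hw (i + 1)]
    simp [← h0, betaH, hi0]
  · rw [betaH] at hnum ⊢
    field_simp
    rw [hS]; ring

lemma measurable_Hsig {i j : ℕ} (hj : j ∈ Finset.Icc 1 i) : Measurable[Hsig R i] (R j) :=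
  measurable_iff_comap_le.2 (le_iSup₂ (f := fun j _ => MeasurableSpace.comap (R j) ⊤) j hj)

lemma measurable_betaH_Hsig (i m : ℕ) : Measurable[Hsig R i] (betaH w R i m) :=
  Measurable.div_const (Finset.measurable_sum _ fun _ hj =>
    ((measurable_Hsig hj).ite_eq_one_zero m).const_mul _) _

variable {α : ℕ → ℝ} {M : ℕ}

noncomputable def sqErr (w : ℕ → ℝ) (R : ℕ → Ω → ℕ) (α : ℕ → ℝ) (M i : ℕ) (ω : Ω) : ℝ :=
  ∑ m ∈ Finset.Icc 1 M, (betaH w R i m ω - α m) ^ 2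

lemma sqErr_nonneg (i : ℕ) (ω : Ω) : 0 ≤ sqErr w R α M i ω :=
  Finset.sum_nonneg fun _ _ => sq_nonneg _

lemma tendsto_betaH_of_tendsto_sqErr {m : ℕ} (hm : m ∈ Finset.Icc 1 M) {ω : Ω}
    (h : Tendsto (fun i => sqErr w R α M i ω) atTop (𝓝 0)) :
    Tendsto (fun i => betaH w R i m ω) atTop (𝓝 (α m)) :=
  tendsto_sub_nhds_zero_iff.1 <| tendsto_zero_of_tendsto_sq_zero <|
    squeeze_zero (fun _ => sq_nonneg _) (fun i => Finset.single_le_sum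
      (f := fun k => (betaH w R i k ω - α k) ^ 2) (fun _ _ => sq_nonneg _) hm) h

lemma sqErr_succ_le_cross (hw : ∀ j, 0 ≤ w j)
    (hα : ∀ m ∈ Finset.Icc 1 M, α m ∈ Set.Icc (0 : ℝ) 1) (i : ℕ) (ω : Ω) :
    sqErr w R α M (i + 1) ω ≤ (1 - wnorm w (i + 1)) ^ 2 * sqErr w R α M i ω
      + 2 * wnorm w (i + 1) * (1 - wnorm w (i + 1)) * ∑ m ∈ Finset.Icc 1 M,
          (betaH w R i m ω - α m) * ((if R (i + 1) ω = m then (1 : ℝ) else 0) - α m)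
      + M * wnorm w (i + 1) ^ 2 := by
  have hM : (M : ℝ) * wnorm w (i + 1) ^ 2 = ∑ _m ∈ Finset.Icc 1 M, wnorm w (i + 1) ^ 2 := by
    simp
  rw [sqErr, sqErr, hM, Finset.mul_sum, Finset.mul_sum, ← Finset.sum_add_distrib,
    ← Finset.sum_add_distrib]
  refine Finset.sum_le_sum fun m hm => ?_
  have hy := (sq_le_one_iff_abs_le_one _).2
    (abs_sub_le_one_of_mem_Icc (ite_one_zero_mem_Icc (R (i + 1) ω = m)) (hα m hm))
  rw [betaH_succ hw]
  nlinarith [mul_le_mul_of_nonneg_left hy (sq_nonneg (wnorm w (i + 1)))]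

lemma sqErr_succ_le (hw : ∀ j, 0 ≤ w j)
    (hα : ∀ m ∈ Finset.Icc 1 M, α m ∈ Set.Icc (0 : ℝ) 1) (i : ℕ) (ω : Ω) :
    sqErr w R α M (i + 1) ω ≤ sqErr w R α M i ω + 3 * M * wnorm w (i + 1) := by
  have hcross : ∑ m ∈ Finset.Icc 1 M,
      (betaH w R i m ω - α m) * ((if R (i + 1) ω = m then (1 : ℝ) else 0) - α m) ≤ M := by
    refine (Finset.sum_le_card_nsmul _ _ 1 fun m hm => ?_).trans (by simp)
    refine (le_abs_self _).trans ?_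
    rw [abs_mul]
    exact mul_le_one₀ (abs_sub_le_one_of_mem_Icc (betaH_mem_Icc hw i m ω) (hα m hm))
      (abs_nonneg _) (abs_sub_le_one_of_mem_Icc (ite_one_zero_mem_Icc _) (hα m hm))
  have ht0 := wnorm_nonneg hw (i + 1)
  have ht1 := wnorm_le_one hw (i + 1)
  have hM := (M.cast_nonneg : (0 : ℝ) ≤ M)
  have hV : (1 - wnorm w (i + 1)) ^ 2 * sqErr w R α M i ω ≤ sqErr w R α M i ω :=
    mul_le_of_le_one_left (sqErr_nonneg i ω) (by nlinarith)
  nlinarith [sqErr_succ_le_cross (R := R) hw hα i ω, mul_le_mul_of_nonneg_left hcross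
    (mul_nonneg (mul_nonneg zero_le_two ht0) (sub_nonneg.2 ht1)),
    mul_nonneg hM (sq_nonneg (wnorm w (i + 1))), mul_nonneg hM ht0]

variable [MeasurableSpace Ω]

lemma Hsig_le (hR : ∀ j, Measurable (R j)) (i : ℕ) : Hsig R i ≤ ‹MeasurableSpace Ω› :=
  iSup₂_le fun j _ => (hR j).comap_le

lemma measurable_betaH (hR : ∀ j, Measurable (R j)) (i m : ℕ) : Measurable (betaH w R i m) :=
  (measurable_betaH_Hsig i m).mono (Hsig_le hR i) le_rfl

variable {μ : Measure Ω} [IsProbabilityMeasure μ]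

lemma integrable_betaH_sub_mul (hR : ∀ j, Measurable (R j)) (hw : ∀ j, 0 ≤ w j) (i m : ℕ)
    {a : ℝ} (ha : a ∈ Set.Icc (0 : ℝ) 1) {f : Ω → ℝ} (hf : Measurable f)
    (hf1 : ∀ ω, |f ω| ≤ 1) : Integrable (fun ω => (betaH w R i m ω - a) * f ω) μ :=
  integrable_mul_of_abs_le_one ((measurable_betaH hR i m).sub_const a) hf
    (fun ω => abs_sub_le_one_of_mem_Icc (betaH_mem_Icc hw i m ω) ha) hf1

lemma integrable_sqErr (hR : ∀ j, Measurable (R j)) (hw : ∀ j, 0 ≤ w j)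
    (hα : ∀ m ∈ Finset.Icc 1 M, α m ∈ Set.Icc (0 : ℝ) 1) (i : ℕ) :
    Integrable (sqErr w R α M i) μ :=
  integrable_finsetSum _ fun m hm => by
    simpa only [sq] using integrable_betaH_sub_mul hR hw i m (hα m hm)
      ((measurable_betaH hR i m).sub_const _)
      fun ω => abs_sub_le_one_of_mem_Icc (betaH_mem_Icc (R := R) hw i m ω) (hα m hm)

lemma integral_mul_ite_sub_eq (hR : ∀ j, Measurable (R j)) {i m : ℕ} {a c : ℝ} {f θ : Ω → ℝ}
    (ha : a ∈ Set.Icc (0 : ℝ) 1) (hf : Measurable[Hsig R i] f) (hf1 : ∀ ω, |f ω| ≤ 1)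
    (hmodel : μ[(fun ω => if R (i + 1) ω = m then (1 : ℝ) else 0) | Hsig R i]
      =ᵐ[μ] fun ω => c * θ ω + (1 - c) * a) :
    ∫ ω, f ω * ((if R (i + 1) ω = m then (1 : ℝ) else 0) - a) ∂μ
      = c * ∫ ω, f ω * (θ ω - a) ∂μ := by
  have hle := Hsig_le hR i
  have hind := (hR (i + 1)).ite_eq_one_zero m
  have hI : Integrable (fun ω => if R (i + 1) ω = m then (1 : ℝ) else 0) μ :=
    .of_bound hind.aestronglyMeasurable 1 <| ae_of_all _ fun ω => by split_ifs <;> simp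
  have hcond : μ[fun ω => (if R (i + 1) ω = m then (1 : ℝ) else 0) - a | Hsig R i]
      =ᵐ[μ] fun ω => c * (θ ω - a) := by
    have hsub : μ[fun ω => (if R (i + 1) ω = m then (1 : ℝ) else 0) - a | Hsig R i]
        =ᵐ[μ] _ := condExp_sub hI (integrable_const a) (Hsig R i)
    filter_upwards [hsub, hmodel] with ω h1 h2
    rw [h1, Pi.sub_apply, h2, condExp_const hle]
    ring
  rw [integral_mul_eq_of_condExp_eq hle hf.stronglyMeasurable
    (integrable_mul_of_abs_le_one (hf.mono hle le_rfl) (hind.sub_const a) hf1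
      fun ω => abs_sub_le_one_of_mem_Icc (ite_one_zero_mem_Icc _) ha)
    (hI.sub (integrable_const a)) hcond]
  simp_rw [mul_left_comm _ c]
  exact integral_const_mul c _

lemma integral_sum_cross_eq (hR : ∀ j, Measurable (R j)) (hw : ∀ j, 0 ≤ w j)
    (hα : ∀ m ∈ Finset.Icc 1 M, α m ∈ Set.Icc (0 : ℝ) 1) {i : ℕ} {c : ℝ} {θ : ℕ → Ω → ℝ}
    (hθmeas : ∀ m, Measurable[Hsig R i] (θ m)) (hθ : ∀ m ω, θ m ω ∈ Set.Icc (0 : ℝ) 1)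
    (hmodel : ∀ m ∈ Finset.Icc 1 M,
      μ[(fun ω => if R (i + 1) ω = m then (1 : ℝ) else 0) | Hsig R i]
        =ᵐ[μ] fun ω => c * θ m ω + (1 - c) * α m) :
    ∫ ω, ∑ m ∈ Finset.Icc 1 M,
        (betaH w R i m ω - α m) * ((if R (i + 1) ω = m then (1 : ℝ) else 0) - α m) ∂μ
      = c * ∫ ω, ∑ m ∈ Finset.Icc 1 M, (betaH w R i m ω - α m) * (θ m ω - α m) ∂μ := by
  rw [integral_finsetSum _ fun m hm => integrable_betaH_sub_mul hR hw i m (hα m hm)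
      (((hR _).ite_eq_one_zero m).sub_const _)
      fun ω => abs_sub_le_one_of_mem_Icc (ite_one_zero_mem_Icc _) (hα m hm),
    integral_finsetSum _ fun m hm => integrable_betaH_sub_mul hR hw i m (hα m hm)
      (((hθmeas m).mono (Hsig_le hR i) le_rfl).sub_const _)
      fun ω => abs_sub_le_one_of_mem_Icc (hθ m ω) (hα m hm),
    Finset.mul_sum]
  exact Finset.sum_congr rfl fun m hm => integral_mul_ite_sub_eq hR (hα m hm)
    ((measurable_betaH_Hsig i m).sub_const _)
    (fun ω => abs_sub_le_one_of_mem_Icc (betaH_mem_Icc hw i m ω) (hα m hm)) (hmodel m hm)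

lemma integral_sqErr_succ_le (hR : ∀ j, Measurable (R j)) (hw : ∀ j, 0 ≤ w j)
    (hα : ∀ m ∈ Finset.Icc 1 M, α m ∈ Set.Icc (0 : ℝ) 1) {i : ℕ} {c g : ℝ}
    (hc : c ∈ Set.Icc (0 : ℝ) 1) (hcg : c ≤ g) {θ : ℕ → Ω → ℝ}
    (hθmeas : ∀ m, Measurable[Hsig R i] (θ m)) (hθ : ∀ m ω, θ m ω ∈ Set.Icc (0 : ℝ) 1)
    (hclose : ∀ᵐ ω ∂μ, ∑ m ∈ Finset.Icc 1 M, (θ m ω - α m) ^ 2 ≤ sqErr w R α M i ω)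
    (hmodel : ∀ m ∈ Finset.Icc 1 M,
      μ[(fun ω => if R (i + 1) ω = m then (1 : ℝ) else 0) | Hsig R i]
        =ᵐ[μ] fun ω => c * θ m ω + (1 - c) * α m) :
    ∫ ω, sqErr w R α M (i + 1) ω ∂μ ≤ ∫ ω, sqErr w R α M i ω ∂μ
      - (1 - g) * (wnorm w (i + 1) * ∫ ω, sqErr w R α M i ω ∂μ) + M * wnorm w (i + 1) ^ 2 := by
  set t := wnorm w (i + 1)
  have hVi := (integrable_sqErr (μ := μ) hR hw hα i).const_mul ((1 - t) ^ 2)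
  have hCi := (integrable_finsetSum (μ := μ) (Finset.Icc 1 M) fun m hm =>
    integrable_betaH_sub_mul hR hw i m (hα m hm) (((hR (i + 1)).ite_eq_one_zero m).sub_const _)
      fun ω => abs_sub_le_one_of_mem_Icc (ite_one_zero_mem_Icc _) (hα m hm)).const_mul
    (2 * t * (1 - t))
  have hCS : ∫ ω, ∑ m ∈ Finset.Icc 1 M, (betaH w R i m ω - α m) * (θ m ω - α m) ∂μ
      ≤ ∫ ω, sqErr w R α M i ω ∂μ :=
    integral_mono_ae (integrable_finsetSum _ fun m hm => integrable_betaH_sub_mul hR hw i m (hα m hm)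
        (((hθmeas m).mono (Hsig_le hR i) le_rfl).sub_const _)
        fun ω => abs_sub_le_one_of_mem_Icc (hθ m ω) (hα m hm))
      (integrable_sqErr hR hw hα i) (hclose.mono fun ω => sum_mul_le_sum_sq_of_sum_sq_le)
  have hV : 0 ≤ ∫ ω, sqErr w R α M i ω ∂μ := integral_nonneg fun ω => sqErr_nonneg i ω
  have ht0 : 0 ≤ t := wnorm_nonneg hw _
  have ht1 : t ≤ 1 := wnorm_le_one hw _
  calc ∫ ω, sqErr w R α M (i + 1) ω ∂μ
      ≤ ∫ ω, ((1 - t) ^ 2 * sqErr w R α M i ω + 2 * t * (1 - t) * ∑ m ∈ Finset.Icc 1 M,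
          (betaH w R i m ω - α m) * ((if R (i + 1) ω = m then (1 : ℝ) else 0) - α m)
          + M * t ^ 2) ∂μ :=
        integral_mono (integrable_sqErr hR hw hα _) ((hVi.add hCi).add (integrable_const _))
          (sqErr_succ_le_cross hw hα i)
    _ = (1 - t) ^ 2 * ∫ ω, sqErr w R α M i ω ∂μ + 2 * t * (1 - t) * (c * ∫ ω,
          ∑ m ∈ Finset.Icc 1 M, (betaH w R i m ω - α m) * (θ m ω - α m) ∂μ) + M * t ^ 2 := by
      rw [integral_add _ (integrable_const _), integral_add hVi hCi, integral_const_mul,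
        integral_const_mul, integral_sum_cross_eq hR hw hα hθmeas hθ hmodel, integral_const,
        probReal_univ, one_smul]
      exact hVi.add hCi
    _ ≤ _ := by
      -- `(1 - t) ^ 2 + 2 * t * (1 - t) * c = 1 - (1 - c) * t - t * ((1 - c) * (1 - t) + t * c)`
      have h1 : 0 ≤ 2 * t * (1 - t) * c := by
        have := hc.1; have := sub_nonneg.2 ht1; positivity
      have h2 : 0 ≤ (1 - c) * (1 - t) + t * c := by
        have := hc.1; have := sub_nonneg.2 hc.2; have := sub_nonneg.2 ht1; positivity
      nlinarith [mul_le_mul_of_nonneg_left hCS h1, mul_nonneg hV (mul_nonneg ht0 h2),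
        mul_nonneg hV (mul_nonneg ht0 (sub_nonneg.2 hcg))]

end HerdingModel

theorem stmt_1_general
    {Ω : Type*} [MeasurableSpace Ω] (μ : Measure Ω) [IsProbabilityMeasure μ]
    (M : ℕ)
    (α : ℕ → ℝ) (hα : ∀ m ∈ Finset.Icc 1 M, α m ∈ Set.Icc (0 : ℝ) 1)
    (R : ℕ → Ω → ℕ)
    (hRmeas : ∀ i, Measurable (R i))
    (w : ℕ → ℝ) (hw : ∀ j, 0 ≤ w j)
    (γ : ℕ → ℝ) (hγ : ∀ i, γ i ∈ Set.Icc (0 : ℝ) 1)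
    (hγsup : ∃ g, g < 1 ∧ ∀ i, γ i ≤ g)
    (θ : ℕ → ℕ → Ω → ℝ)
    (hθmeas : ∀ i m, Measurable[Hsig R i] (θ i m))
    (hθ0 : ∀ m ω, θ 0 m ω = α m)
    (hθrange : ∀ i m ω, θ i m ω ∈ Set.Icc (0 : ℝ) 1)
    -- Assumption 1 (accurate review selection): `‖θ_i − α‖ ≤ ‖β_i − α‖` a.s.
    (hθclose : ∀ i, 1 ≤ i → ∀ᵐ ω ∂μ,
      ∑ m ∈ Finset.Icc 1 M, (θ i m ω - α m) ^ 2
        ≤ ∑ m ∈ Finset.Icc 1 M, (betaH w R i m ω - α m) ^ 2)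
    -- herding model: `P[R_{i+1} = m | 𝓗_i] = γ_i θ_{i,m} + (1 − γ_i) α_m` a.s.
    (hmodel : ∀ i : ℕ, ∀ m ∈ Finset.Icc 1 M,
      μ[(fun ω => if R (i + 1) ω = m then (1 : ℝ) else 0) | Hsig R i]
        =ᵐ[μ] fun ω => γ i * θ i m ω + (1 - γ i) * α m)
    -- Condition (2): `∑ w̃_i = ∞` and `∑ w̃_i² < ∞`
    (hdiv : Tendsto (fun n => ∑ i ∈ Finset.Icc 1 n, wnorm w i) atTop atTop)
    (hsq : Summable fun i : ℕ => (wnorm w (i + 1)) ^ 2) :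
    μ {ω | ∀ m ∈ Finset.Icc 1 M,
        Tendsto (fun i => betaH w R i m ω) atTop (nhds (α m))} = 1 := by
  obtain ⟨g, hg1, hγg⟩ := hγsup
  have hclose : ∀ i, ∀ᵐ ω ∂μ,
      ∑ m ∈ Finset.Icc 1 M, (θ i m ω - α m) ^ 2 ≤ sqErr w R α M i ω
    | 0 => ae_of_all _ fun ω => by simpa [hθ0] using sqErr_nonneg 0 ω
    | i + 1 => hθclose (i + 1) (Nat.le_add_left 1 i)
  have hsumE : Summable fun i => wnorm w (i + 1) * ∫ ω, sqErr w R α M i ω ∂μ :=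
    summable_mul_of_le_sub_mul_add (sub_pos.2 hg1)
      (fun i => integral_nonneg fun ω => sqErr_nonneg i ω) (fun i => wnorm_nonneg hw _)
      (hsq.mul_left (M : ℝ)) (fun i => by positivity) fun i => integral_sqErr_succ_le hRmeas hw hα
        (hγ i) (hγg i) (hθmeas i) (hθrange i) (hclose i) (hmodel i)
  have hdiv' : ¬ Summable fun i => wnorm w (i + 1) := fun hs =>
    not_tendsto_atTop_of_tendsto_nhds hs.hasSum.tendsto_sum_nat
      (hdiv.congr fun n => Finset.sum_Icc_one_eq_sum_range _ n)
  have hlim : ∀ᵐ ω ∂μ, Tendsto (fun i => sqErr w R α M i ω) atTop (𝓝 0) := by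
    filter_upwards [ae_summable_of_summable_integral
      (f := fun i ω => wnorm w (i + 1) * sqErr w R α M i ω)
      (fun i ω => mul_nonneg (wnorm_nonneg hw _) (sqErr_nonneg i ω))
      (fun i => (integrable_sqErr hRmeas hw hα i).const_mul _)
      (by simpa only [integral_const_mul] using hsumE)] with ω hω
    exact tendsto_zero_of_le_add_mul_of_summable_mul (by positivity) (fun i => sqErr_nonneg i ω)
      (fun i => wnorm_nonneg hw _) (fun i => sqErr_succ_le hw hα i ω) hω hdiv'
      (tendsto_zero_of_tendsto_sq_zero hsq.tendsto_atTop_zero)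
  refine (measure_congr (ae_eq_univ.2 ?_)).trans measure_univ
  filter_upwards [hlim] with ω hω m hm
  exact tendsto_betaH_of_tendsto_sqErr hm hω

/-- Under the herding model, if `∑ w̃_i = ∞` and `∑ w̃_i² < ∞`,
then the historical collective opinion `β_i` converges to the ground-truth
collective opinion `α` almost surely. -/
theorem stmt_1
    {Ω : Type*} [MeasurableSpace Ω] (μ : Measure Ω) [IsProbabilityMeasure μ]
    (M : ℕ) (hM : 1 ≤ M)
    (α : ℕ → ℝ) (hα : ∀ m ∈ Finset.Icc 1 M, α m ∈ Set.Icc (0 : ℝ) 1)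
    (hα1 : ∑ m ∈ Finset.Icc 1 M, α m = 1)
    (R : ℕ → Ω → ℕ) (hRrange : ∀ i, 1 ≤ i → ∀ ω, R i ω ∈ Finset.Icc 1 M)
    (hRmeas : ∀ i, Measurable (R i))
    (w : ℕ → ℝ) (hw : ∀ j, 0 ≤ w j) (hw1 : 0 < w 1)
    (γ : ℕ → ℝ) (hγ : ∀ i, γ i ∈ Set.Icc (0 : ℝ) 1)
    (hγsup : ∃ g, g < 1 ∧ ∀ i, γ i ≤ g)
    (θ : ℕ → ℕ → Ω → ℝ)
    (hθmeas : ∀ i m, Measurable[Hsig R i] (θ i m))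
    (hθ0 : ∀ m ω, θ 0 m ω = α m)
    (hθrange : ∀ i m ω, θ i m ω ∈ Set.Icc (0 : ℝ) 1)
    (hθsum : ∀ i ω, ∑ m ∈ Finset.Icc 1 M, θ i m ω = 1)
    -- Assumption 1 (accurate review selection): `‖θ_i − α‖ ≤ ‖β_i − α‖` a.s.
    (hθclose : ∀ i, 1 ≤ i → ∀ᵐ ω ∂μ,
      ∑ m ∈ Finset.Icc 1 M, (θ i m ω - α m) ^ 2
        ≤ ∑ m ∈ Finset.Icc 1 M, (betaH w R i m ω - α m) ^ 2)
    -- herding model: `P[R_{i+1} = m | 𝓗_i] = γ_i θ_{i,m} + (1 − γ_i) α_m` a.s.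
    (hmodel : ∀ i : ℕ, ∀ m ∈ Finset.Icc 1 M,
      μ[(fun ω => if R (i + 1) ω = m then (1 : ℝ) else 0) | Hsig R i]
        =ᵐ[μ] fun ω => γ i * θ i m ω + (1 - γ i) * α m)
    -- Condition (2): `∑ w̃_i = ∞` and `∑ w̃_i² < ∞`
    (hdiv : Tendsto (fun n => ∑ i ∈ Finset.Icc 1 n, wnorm w i) atTop atTop)
    (hsq : Summable fun i : ℕ => (wnorm w (i + 1)) ^ 2) :
    μ {ω | ∀ m ∈ Finset.Icc 1 M,
        Tendsto (fun i => betaH w R i m ω) atTop (nhds (α m))} = 1 :=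
  stmt_1_general μ M α hα R hRmeas w hw γ hγ hγsup θ hθmeas hθ0 hθrange hθclose hmodel hdiv hsq
end

section
/- The convergence-speed metric φ_i is non-increasing in each herding strength: if γ and γ′ are sequences in [0,1] with γ_j ≤ γ′_j for all j ≤ i (and all weights w̃_ℓ ∈ [0,1) for ℓ ≥ 2 and accuracies η_ℓ ∈ [0,1] fixed), then φ_i(w, η, γ′) ≤ φ_i(w, η, γ). -/
/-! Writing `f_ℓ` for the `ℓ`-th factor of `ϕ`, the denominator of `φ_i` is, up to the
factor `1/2`, the sum `∑_{j=1}^i w̃_j² (∏_{ℓ=j}^{i-1} f_ℓ)²`: the ratios `ϕ_{i-1}/ϕ_{j-1}`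
telescope. Each factor `f_ℓ = 1 − w̃_{ℓ+1} + w̃_{ℓ+1} (1 − η_ℓ) γ_ℓ` is positive and
non-decreasing in `γ_ℓ`, so the denominator is non-decreasing in `γ` and `φ_i` is
non-increasing. The only subtlety is Lean's `1 / 0 = 0`: the denominator vanishes exactly
when all the weights `w̃_1, …, w̃_i` do, for every `γ` at once. -/

/-- `ϕ_j = ∏_{ℓ=1}^j [1 − w̃_{ℓ+1} (1 − γ_ℓ + η_ℓ γ_ℓ)]` (with `ϕ_0 = 1`),
where `wt` is the sequence of normalized weights. -/
noncomputable def varphi (wt γ η : ℕ → ℝ) (j : ℕ) : ℝ :=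
  ∏ ℓ ∈ Finset.Icc 1 j, (1 - wt (ℓ + 1) * (1 - γ ℓ + η ℓ * γ ℓ))

/-- Convergence-speed metric `φ_i = 1 / ((ϕ_{i−1}²/2) · ∑_{j=1}^i w̃_j²/ϕ_{j−1}²)`. -/
noncomputable def phiSpeed (wt γ η : ℕ → ℝ) (i : ℕ) : ℝ :=
  1 / ((varphi wt γ η (i - 1)) ^ 2 / 2 *
    ∑ j ∈ Finset.Icc 1 i, (wt j) ^ 2 / (varphi wt γ η (j - 1)) ^ 2)

open Finset

noncomputable def herdingFactor (wt γ η : ℕ → ℝ) (ℓ : ℕ) : ℝ :=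
  1 - wt (ℓ + 1) * (1 - γ ℓ + η ℓ * γ ℓ)

lemma varphi_sub_one_eq_prod_Ico (wt γ η : ℕ → ℝ) (j : ℕ) :
    varphi wt γ η (j - 1) = ∏ ℓ ∈ Ico 1 j, herdingFactor wt γ η ℓ := by
  have hIcc : Icc 1 (j - 1) = Ico 1 j := by
    ext ℓ
    simp only [mem_Icc, mem_Ico]
    omega
  rw [varphi, hIcc]
  rfl

section herdingFactor

variable {wt γ γ' η : ℕ → ℝ} {ℓ : ℕ}

lemma herdingFactor_pos (hw₀ : 0 ≤ wt (ℓ + 1)) (hw₁ : wt (ℓ + 1) < 1) (hγ : 0 ≤ γ ℓ)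
    (hη : η ℓ ≤ 1) : 0 < herdingFactor wt γ η ℓ := by
  have hle : 1 - γ ℓ + η ℓ * γ ℓ ≤ 1 := by linarith [mul_nonneg (sub_nonneg.mpr hη) hγ]
  have := mul_le_of_le_one_right hw₀ hle
  rw [herdingFactor]
  linarith

lemma herdingFactor_le_herdingFactor (hw₀ : 0 ≤ wt (ℓ + 1)) (hη : η ℓ ≤ 1)
    (hγγ' : γ ℓ ≤ γ' ℓ) : herdingFactor wt γ η ℓ ≤ herdingFactor wt γ' η ℓ := by
  rw [herdingFactor, herdingFactor]
  linarith [mul_nonneg (mul_nonneg hw₀ (sub_nonneg.mpr hγγ')) (sub_nonneg.mpr hη)]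

end herdingFactor

section TailProducts

variable (f g w : ℕ → ℝ) (i : ℕ)

lemma sq_prod_Ico_mul_sum_div (hf : ∀ ℓ ∈ Ico 1 i, f ℓ ≠ 0) :
    (∏ ℓ ∈ Ico 1 i, f ℓ) ^ 2 * ∑ j ∈ Icc 1 i, w j / (∏ ℓ ∈ Ico 1 j, f ℓ) ^ 2 =
      ∑ j ∈ Icc 1 i, w j * (∏ ℓ ∈ Ico j i, f ℓ) ^ 2 := by
  rw [mul_sum]
  refine sum_congr rfl fun j hj => ?_
  obtain ⟨hj₁, hji⟩ := mem_Icc.mp hj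
  have hhead : ∏ ℓ ∈ Ico 1 j, f ℓ ≠ 0 :=
    prod_ne_zero_iff.mpr fun ℓ hℓ => hf ℓ (Ico_subset_Ico_right hji hℓ)
  rw [← prod_Ico_consecutive f hj₁ hji]
  field_simp

variable {f g w i}

lemma sum_mul_sq_prod_Ico_le (hw : ∀ j ∈ Icc 1 i, 0 ≤ w j) (hf : ∀ ℓ ∈ Ico 1 i, 0 ≤ f ℓ)
    (hfg : ∀ ℓ ∈ Ico 1 i, f ℓ ≤ g ℓ) :
    ∑ j ∈ Icc 1 i, w j * (∏ ℓ ∈ Ico j i, f ℓ) ^ 2 ≤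
      ∑ j ∈ Icc 1 i, w j * (∏ ℓ ∈ Ico j i, g ℓ) ^ 2 := by
  refine sum_le_sum fun j hj => ?_
  have htail : Ico j i ⊆ Ico 1 i := Ico_subset_Ico_left (mem_Icc.mp hj).1
  have hprod : ∏ ℓ ∈ Ico j i, f ℓ ≤ ∏ ℓ ∈ Ico j i, g ℓ :=
    prod_le_prod (fun ℓ hℓ => hf ℓ (htail hℓ)) fun ℓ hℓ => hfg ℓ (htail hℓ)
  have hf₀ : 0 ≤ ∏ ℓ ∈ Ico j i, f ℓ := prod_nonneg fun ℓ hℓ => hf ℓ (htail hℓ)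
  exact mul_le_mul_of_nonneg_left (pow_le_pow_left₀ hf₀ hprod 2) (hw j hj)

lemma sum_mul_sq_prod_Ico_pos (hw : ∀ j ∈ Icc 1 i, 0 ≤ w j) (hf : ∀ ℓ ∈ Ico 1 i, 0 < f ℓ)
    (hne : ∃ j ∈ Icc 1 i, 0 < w j) :
    0 < ∑ j ∈ Icc 1 i, w j * (∏ ℓ ∈ Ico j i, f ℓ) ^ 2 := by
  obtain ⟨j, hj, hwj⟩ := hne
  refine sum_pos' (fun k hk => mul_nonneg (hw k hk) (sq_nonneg _)) ⟨j, hj, ?_⟩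
  have hprod := prod_pos fun ℓ hℓ => hf ℓ (Ico_subset_Ico_left (mem_Icc.mp hj).1 hℓ)
  exact mul_pos hwj (pow_pos hprod 2)

end TailProducts

lemma phiSpeed_eq_two_div {wt γ η : ℕ → ℝ} {i : ℕ}
    (hf : ∀ ℓ ∈ Ico 1 i, herdingFactor wt γ η ℓ ≠ 0) :
    phiSpeed wt γ η i =
      2 / ∑ j ∈ Icc 1 i, wt j ^ 2 * (∏ ℓ ∈ Ico j i, herdingFactor wt γ η ℓ) ^ 2 := by
  rw [← sq_prod_Ico_mul_sum_div _ _ _ hf, phiSpeed]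
  simp only [varphi_sub_one_eq_prod_Ico]
  ring

theorem stmt_4_general (wt γ γ' η : ℕ → ℝ) (i : ℕ)
    (hwt : ∀ ℓ, 2 ≤ ℓ → wt ℓ ∈ Set.Ico (0 : ℝ) 1)
    (hγ : ∀ j, γ j ∈ Set.Icc (0 : ℝ) 1)
    (hη : ∀ j, η j ∈ Set.Icc (0 : ℝ) 1)
    (hle : ∀ j ≤ i, γ j ≤ γ' j) :
    phiSpeed wt γ' η i ≤ phiSpeed wt γ η i := by
  have hwt' : ∀ ℓ ∈ Ico 1 i, wt (ℓ + 1) ∈ Set.Ico (0 : ℝ) 1 := fun ℓ hℓ =>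
    hwt (ℓ + 1) (by simp only [mem_Ico] at hℓ; omega)
  have hf : ∀ ℓ ∈ Ico 1 i, 0 < herdingFactor wt γ η ℓ := fun ℓ hℓ =>
    herdingFactor_pos (hwt' ℓ hℓ).1 (hwt' ℓ hℓ).2 (hγ ℓ).1 (hη ℓ).2
  have hfg : ∀ ℓ ∈ Ico 1 i, herdingFactor wt γ η ℓ ≤ herdingFactor wt γ' η ℓ := fun ℓ hℓ =>
    herdingFactor_le_herdingFactor (hwt' ℓ hℓ).1 (hη ℓ).2 (hle ℓ (mem_Ico.mp hℓ).2.le)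
  rw [phiSpeed_eq_two_div fun ℓ hℓ => ((hf ℓ hℓ).trans_le (hfg ℓ hℓ)).ne',
    phiSpeed_eq_two_div fun ℓ hℓ => (hf ℓ hℓ).ne']
  by_cases hw : ∀ j ∈ Icc 1 i, wt j = 0
  · have hzero (δ : ℕ → ℝ) :
        ∑ j ∈ Icc 1 i, wt j ^ 2 * (∏ ℓ ∈ Ico j i, herdingFactor wt δ η ℓ) ^ 2 = 0 :=
      sum_eq_zero fun j hj => by simp [hw j hj]
    rw [hzero, hzero]
  · push Not at hw
    obtain ⟨j, hj, hwj⟩ := hw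
    have hsq : ∀ j ∈ Icc 1 i, 0 ≤ wt j ^ 2 := fun k _ => sq_nonneg (wt k)
    exact div_le_div_of_nonneg_left zero_le_two
      (sum_mul_sq_prod_Ico_pos hsq hf ⟨j, hj, by positivity⟩)
      (sum_mul_sq_prod_Ico_le hsq (fun ℓ hℓ => (hf ℓ hℓ).le) hfg)

/-- the convergence-speed metric `φ_i` is non-increasing in each
herding strength `γ_j`, `j ≤ i`. -/
theorem stmt_4 (wt γ γ' η : ℕ → ℝ) (i : ℕ) (hi : 1 ≤ i)
    (hwt : ∀ ℓ, 2 ≤ ℓ → wt ℓ ∈ Set.Ico (0 : ℝ) 1)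
    (hγ : ∀ j, γ j ∈ Set.Icc (0 : ℝ) 1)
    (hγ' : ∀ j, γ' j ∈ Set.Icc (0 : ℝ) 1)
    (hη : ∀ j, η j ∈ Set.Icc (0 : ℝ) 1)
    (hle : ∀ j ≤ i, γ j ≤ γ' j) :
    phiSpeed wt γ' η i ≤ phiSpeed wt γ η i :=
  stmt_4_general wt γ γ' η i hwt hγ hη hle
end

section
/- The convergence-speed metric φ_i is non-decreasing in each review-selection accuracy: if η and η′ are sequences in [0,1] with η_j ≤ η′_j for all j ≤ i (and all weights w̃_ℓ ∈ [0,1) for ℓ ≥ 2 and herding strengths γ_ℓ ∈ [0,1] fixed), then φ_i(w, η, γ) ≤ φ_i(w, η′, γ). -/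
open Finset

lemma inv_sum_mul_le_inv_sum_mul {ι 𝕜 : Type*} [Field 𝕜] [LinearOrder 𝕜] [IsStrictOrderedRing 𝕜]
    {s : Finset ι} {a x y : ι → 𝕜} (ha : ∀ j ∈ s, 0 ≤ a j) (hy : ∀ j ∈ s, 0 < y j)
    (hyx : ∀ j ∈ s, y j ≤ x j) :
    (∑ j ∈ s, a j * x j)⁻¹ ≤ (∑ j ∈ s, a j * y j)⁻¹ := by
  have hle : ∑ j ∈ s, a j * y j ≤ ∑ j ∈ s, a j * x j :=
    sum_le_sum fun j hj => mul_le_mul_of_nonneg_left (hyx j hj) (ha j hj)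
  rcases (sum_nonneg fun j hj => mul_nonneg (ha j hj) (hy j hj).le).eq_or_lt with h0 | hpos
  · have ha0 : ∀ j ∈ s, a j = 0 := fun j hj =>
      (mul_eq_zero.mp ((sum_eq_zero_iff_of_nonneg fun j hj =>
        mul_nonneg (ha j hj) (hy j hj).le).mp h0.symm j hj)).resolve_right (hy j hj).ne'
    have hx0 : ∑ j ∈ s, a j * x j = 0 := sum_eq_zero fun j hj => by rw [ha0 j hj, zero_mul]
    rw [hx0, ← h0]
  · exact inv_anti₀ hpos hle

lemma one_sub_mul_one_sub_add_mul_pos {w g e : ℝ} (hw₀ : 0 ≤ w) (hw₁ : w < 1) (hg : 0 ≤ g)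
    (he : e ≤ 1) : 0 < 1 - w * (1 - g + e * g) := by
  have : 1 - g + e * g ≤ 1 := by nlinarith
  nlinarith

lemma one_sub_mul_one_sub_add_mul_anti {w g e e' : ℝ} (hw : 0 ≤ w) (hg : 0 ≤ g) (he : e ≤ e') :
    1 - w * (1 - g + e' * g) ≤ 1 - w * (1 - g + e * g) := by
  nlinarith [mul_nonneg hw (mul_nonneg hg (sub_nonneg.mpr he))]

noncomputable def varphiFactor (wt γ η : ℕ → ℝ) (ℓ : ℕ) : ℝ :=
  1 - wt (ℓ + 1) * (1 - γ ℓ + η ℓ * γ ℓ)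

lemma varphi_eq_prod_Ioc (wt γ η : ℕ → ℝ) (j : ℕ) :
    varphi wt γ η j = ∏ ℓ ∈ Ioc 0 j, varphiFactor wt γ η ℓ := by
  rw [varphi, ← Finset.Icc_add_one_left_eq_Ioc]
  rfl

lemma varphi_mul_prod_Ioc (wt γ η : ℕ → ℝ) {j k : ℕ} (h : j ≤ k) :
    varphi wt γ η j * ∏ ℓ ∈ Ioc j k, varphiFactor wt γ η ℓ = varphi wt γ η k := by
  simp only [varphi_eq_prod_Ioc]
  exact prod_Ioc_consecutive _ j.zero_le h

section Positivity

variable {wt γ : ℕ → ℝ} (hwt : ∀ ℓ, 2 ≤ ℓ → wt ℓ ∈ Set.Ico (0 : ℝ) 1) (hγ : ∀ ℓ, 0 ≤ γ ℓ)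
include hwt hγ

lemma prod_varphiFactor_pos {η : ℕ → ℝ} (hη : ∀ ℓ, η ℓ ≤ 1) (j k : ℕ) :
    0 < ∏ ℓ ∈ Ioc j k, varphiFactor wt γ η ℓ :=
  prod_pos fun ℓ hℓ =>
    one_sub_mul_one_sub_add_mul_pos (hwt (ℓ + 1) (by grind)).1 (hwt (ℓ + 1) (by grind)).2
      (hγ ℓ) (hη ℓ)

lemma varphi_pos {η : ℕ → ℝ} (hη : ∀ ℓ, η ℓ ≤ 1) (j : ℕ) : 0 < varphi wt γ η j := by
  rw [varphi_eq_prod_Ioc]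
  exact prod_varphiFactor_pos hwt hγ hη 0 j

lemma prod_varphiFactor_anti {η η' : ℕ → ℝ} (hη' : ∀ ℓ, η' ℓ ≤ 1) {j k : ℕ}
    (hle : ∀ ℓ ∈ Ioc j k, η ℓ ≤ η' ℓ) :
    ∏ ℓ ∈ Ioc j k, varphiFactor wt γ η' ℓ ≤ ∏ ℓ ∈ Ioc j k, varphiFactor wt γ η ℓ :=
  prod_le_prod
    (fun ℓ _ => (one_sub_mul_one_sub_add_mul_pos (hwt (ℓ + 1) (by grind)).1
      (hwt (ℓ + 1) (by grind)).2 (hγ ℓ) (hη' ℓ)).le)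
    (fun ℓ hℓ => one_sub_mul_one_sub_add_mul_anti (hwt (ℓ + 1) (by grind)).1 (hγ ℓ) (hle ℓ hℓ))

lemma phiSpeed_eq_inv_sum {η : ℕ → ℝ} (hη : ∀ ℓ, η ℓ ≤ 1) (i : ℕ) :
    phiSpeed wt γ η i =
      (∑ j ∈ Icc 1 i, wt j ^ 2 / 2 * (∏ ℓ ∈ Ioc (j - 1) (i - 1), varphiFactor wt γ η ℓ) ^ 2)⁻¹ := by
  rw [phiSpeed, one_div, mul_sum]
  congr 1
  refine sum_congr rfl fun j hj => ?_
  have hne := (varphi_pos hwt hγ hη (j - 1)).ne'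
  rw [← varphi_mul_prod_Ioc wt γ η (by grind : j - 1 ≤ i - 1)]
  field_simp

end Positivity

theorem stmt_5_general (wt γ η η' : ℕ → ℝ) (i : ℕ)
    (hwt : ∀ ℓ, 2 ≤ ℓ → wt ℓ ∈ Set.Ico (0 : ℝ) 1)
    (hγ : ∀ j, γ j ∈ Set.Icc (0 : ℝ) 1)
    (hη : ∀ j, η j ∈ Set.Icc (0 : ℝ) 1)
    (hη' : ∀ j, η' j ∈ Set.Icc (0 : ℝ) 1)
    (hle : ∀ j ≤ i, η j ≤ η' j) :
    phiSpeed wt γ η i ≤ phiSpeed wt γ η' i := by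
  have hγ₀ : ∀ ℓ, 0 ≤ γ ℓ := fun ℓ => (hγ ℓ).1
  have hη₁ : ∀ ℓ, η ℓ ≤ 1 := fun ℓ => (hη ℓ).2
  have hη₁' : ∀ ℓ, η' ℓ ≤ 1 := fun ℓ => (hη' ℓ).2
  rw [phiSpeed_eq_inv_sum hwt hγ₀ hη₁, phiSpeed_eq_inv_sum hwt hγ₀ hη₁']
  refine inv_sum_mul_le_inv_sum_mul (fun j _ => by positivity)
    (fun j _ => pow_pos (prod_varphiFactor_pos hwt hγ₀ hη₁' _ _) 2) fun j _ => ?_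
  exact pow_le_pow_left₀ (prod_varphiFactor_pos hwt hγ₀ hη₁' _ _).le
    (prod_varphiFactor_anti hwt hγ₀ hη₁' fun ℓ hℓ => hle ℓ (by grind)) 2

/-- the convergence-speed metric `φ_i` is non-decreasing in each
review-selection accuracy `η_j`, `j ≤ i`. -/
theorem stmt_5 (wt γ η η' : ℕ → ℝ) (i : ℕ) (hi : 1 ≤ i)
    (hwt : ∀ ℓ, 2 ≤ ℓ → wt ℓ ∈ Set.Ico (0 : ℝ) 1)
    (hγ : ∀ j, γ j ∈ Set.Icc (0 : ℝ) 1)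
    (hη : ∀ j, η j ∈ Set.Icc (0 : ℝ) 1)
    (hη' : ∀ j, η' j ∈ Set.Icc (0 : ℝ) 1)
    (hle : ∀ j ≤ i, η j ≤ η' j) :
    phiSpeed wt γ η i ≤ phiSpeed wt γ η' i :=
  stmt_5_general wt γ η η' i hwt hγ hη hη' hle
end

section
/- Let (α*, Θ*, γ*) be any maximizer of the log-likelihood L(α, γ, Θ) = ∑_{i=2}^N ln( γ_{i−1}·θ_{i−1, r_i} + (1 − γ_{i−1})·α_{r_i} ) over the feasible set, and suppose L(α*, γ*, Θ*) > −∞. Then for every index i with 1 ≤ i ≤ N − 1: if θ*_{i, r_{i+1}} < α*_{r_{i+1}} then γ*_i = 0, and if θ*_{i, r_{i+1}} > α*_{r_{i+1}} then γ*_i = 1. -/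
/-- Historical collective opinion computed from observed (deterministic) ratings:
`β_{i,m} = (∑_{j=1}^i w_j 1{r_j = m}) / (∑_{j=1}^i w_j)`. -/
noncomputable def betaD (w : ℕ → ℝ) (r : ℕ → ℕ) (i m : ℕ) : ℝ :=
  (∑ j ∈ Finset.Icc 1 i, w j * (if r j = m then (1 : ℝ) else 0)) /
    ∑ j ∈ Finset.Icc 1 i, w j

/-- Feasible set of the maximum-likelihood problem (Problem 1): `α` in the
probability simplex, each `θ_i` in the probability simplex with
`‖θ_i − α‖ ≤ ‖β_i − α‖` (squared Euclidean norm), and `γ_i ∈ [0,1]`, for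
`i = 1, …, N−1`. -/
def Feasible (M N : ℕ) (w : ℕ → ℝ) (r : ℕ → ℕ)
    (α : ℕ → ℝ) (θ : ℕ → ℕ → ℝ) (γ : ℕ → ℝ) : Prop :=
  (∀ m ∈ Finset.Icc 1 M, α m ∈ Set.Icc (0 : ℝ) 1) ∧
  (∑ m ∈ Finset.Icc 1 M, α m = 1) ∧
  ∀ i ∈ Finset.Icc 1 (N - 1),
    (∀ m ∈ Finset.Icc 1 M, θ i m ∈ Set.Icc (0 : ℝ) 1) ∧
    (∑ m ∈ Finset.Icc 1 M, θ i m = 1) ∧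
    (∑ m ∈ Finset.Icc 1 M, (θ i m - α m) ^ 2
      ≤ ∑ m ∈ Finset.Icc 1 M, (betaD w r i m - α m) ^ 2) ∧
    γ i ∈ Set.Icc (0 : ℝ) 1

/-- Log-likelihood `L(α, γ, Θ) = ∑_{i=2}^N ln(γ_{i−1} θ_{i−1,r_i} + (1 − γ_{i−1}) α_{r_i})`. -/
noncomputable def logLik (N : ℕ) (r : ℕ → ℕ)
    (α : ℕ → ℝ) (θ : ℕ → ℕ → ℝ) (γ : ℕ → ℝ) : ℝ :=
  ∑ i ∈ Finset.Icc 2 N, Real.log (γ (i - 1) * θ (i - 1) (r i) + (1 - γ (i - 1)) * α (r i))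

/-- any maximizer `(α*, Θ*, γ*)` of the log-likelihood over the
feasible set with finite likelihood value satisfies, for `1 ≤ i ≤ N − 1`:
`θ*_{i,r_{i+1}} < α*_{r_{i+1}} → γ*_i = 0` and `θ*_{i,r_{i+1}} > α*_{r_{i+1}} → γ*_i = 1`. -/
theorem stmt_10 (M N : ℕ) (hM : 1 ≤ M) (hN : 2 ≤ N)
    (r : ℕ → ℕ) (hr : ∀ i ∈ Finset.Icc 1 N, r i ∈ Finset.Icc 1 M)
    (w : ℕ → ℝ) (hw : ∀ j, 0 ≤ w j) (hw1 : 0 < w 1)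
    (α : ℕ → ℝ) (θ : ℕ → ℕ → ℝ) (γ : ℕ → ℝ)
    (hfeas : Feasible M N w r α θ γ)
    (hmax : ∀ α' : ℕ → ℝ, ∀ θ' : ℕ → ℕ → ℝ, ∀ γ' : ℕ → ℝ,
      Feasible M N w r α' θ' γ' → logLik N r α' θ' γ' ≤ logLik N r α θ γ)
    -- `L(α*, γ*, Θ*) > −∞`: every term inside the logarithm is positive
    (hfin : ∀ i ∈ Finset.Icc 2 N,
      0 < γ (i - 1) * θ (i - 1) (r i) + (1 - γ (i - 1)) * α (r i)) :
    ∀ i : ℕ, 1 ≤ i → i ≤ N - 1 →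
      (θ i (r (i + 1)) < α (r (i + 1)) → γ i = 0) ∧
      (α (r (i + 1)) < θ i (r (i + 1)) → γ i = 1) := by
  
  intro i hi1 hiN
  have hiI : i ∈ Finset.Icc 1 (N-1) := Finset.mem_Icc.mpr ⟨hi1, hiN⟩
  obtain ⟨hα, hαs, hθγ⟩ := hfeas
  have hγi := (hθγ i hiI).2.2.2
  have hi1mem : i + 1 ∈ Finset.Icc 2 N := Finset.mem_Icc.mpr ⟨by omega, by omega⟩
  have hpos := hfin (i+1) hi1mem
  simp only [Nat.add_sub_cancel] at hpos
  have key : ∀ c : ℝ, c ∈ Set.Icc (0:ℝ) 1 →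
      (γ i * θ i (r (i+1)) + (1 - γ i) * α (r (i+1))
        < c * θ i (r (i+1)) + (1 - c) * α (r (i+1))) → False := by
    intro c hc hlt
    set γ' := Function.update γ i c with hγ'
    have hfeas' : Feasible M N w r α θ γ' := by
      refine ⟨hα, hαs, fun j hj => ?_⟩
      obtain ⟨h1, h2, h3, h4⟩ := hθγ j hj
      refine ⟨h1, h2, h3, ?_⟩
      by_cases hji : j = i
      · subst hji; simpa [γ'] using hc
      · simpa [γ', Function.update_of_ne hji] using h4
    have hlt' : logLik N r α θ γ < logLik N r α θ γ' := by
      unfold logLik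
      apply Finset.sum_lt_sum
      · intro j hj
        by_cases hji : j = i + 1
        · subst hji
          simp only [Nat.add_sub_cancel, γ', Function.update_self]
          exact le_of_lt (Real.log_lt_log hpos hlt)
        · have hj1 : j - 1 ≠ i := by
            have : 2 ≤ j := (Finset.mem_Icc.mp hj).1
            omega
          rw [hγ', Function.update_of_ne hj1]
      · exact ⟨i+1, hi1mem, by
          simp only [Nat.add_sub_cancel, γ', Function.update_self]
          exact Real.log_lt_log hpos hlt⟩
    exact absurd (hmax α θ γ' hfeas') (not_le.mpr hlt')
  constructor
  · intro hlt
    by_contra hne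
    have hγpos : 0 < γ i := lt_of_le_of_ne hγi.1 (Ne.symm hne)
    exact key 0 ⟨le_refl 0, zero_le_one⟩ (by nlinarith)
  · intro hlt
    by_contra hne
    have hγlt : γ i < 1 := lt_of_le_of_ne hγi.2 hne
    exact key 1 ⟨zero_le_one, le_refl 1⟩ (by nlinarith)
end
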